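/- arXiv:1608.02718 — 2 statements merged into one kernel-verified Lean document; each statement's English description precedes it below -/
import Mathlib

section
/- Let Y be a weak-strong solution of (DSDE)(γ, x₀): for P-a.e. ω, Y(·,ω) is a continuous Q^ω-martingale solving Y_t = Y₀ + ∫₀^t γ(s, Y_s, ω) dB_s(·,ω), the W^i (i = 1,…,N) are (𝒢_t)-Brownian motions on the product space (Ω₀, 𝒢, 𝐐), and for every s, the map ω ↦ E^{Q^ω}[𝒜(Y_r(·,ω), r ∈ [0,s])] is ℱ_s-measurable for bounded continuous 𝒜. Then: (1) Y is a (𝒢_t)-martingale on (Ω₀, 𝒢, 𝐐), and (2) the covariation [Y, W^i] = 0 for all 1 ≤ i ≤ N. -/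
/-!
Both claims are the case `V = 1`, resp. `V = Wⁱ`, of one statement: if `V` depends on `ω` only
and `V ∘ fst` is a `(𝒢_t)`-martingale, then so is `Y · (V ∘ fst)`. Since `𝒢_s` is generated by
the π-system of sets `{Y^s ∈ B} ∩ (F × Ω₁)`, `F ∈ ℱ_s`, where `Y^s` is the path stopped at `s`,
it suffices to compare integrals over such sets. Disintegrating `P ⊗ Q`, the integral of
`Y_t V_t` over such a set is `∫_F V_t g_t dP` with `g_u(ω) = E^{Q^ω}[Y_u 1_B(Y^s)]`. The quenched
martingale property gives `g_t = g_s` `P`-a.e., and `g_s` agrees a.e. with an `ℱ_s`-measurable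
function (truncate `Y_s` to reach the bounded functionals of the hypothesis), so the martingale
property of `V ∘ fst` replaces `V_t` by `V_s`.
-/

open MeasureTheory ProbabilityTheory Set

/-- A process `f` is a martingale on the time interval `[0,T]` with respect to the
filtration `𝒢` and measure `μ`. -/
def MartingaleOn {Ω : Type*} {m : MeasurableSpace Ω} (f : ℝ → Ω → ℝ)
    (𝒢 : MeasureTheory.Filtration ℝ m) (μ : MeasureTheory.Measure Ω) (T : ℝ) : Prop :=
  MeasureTheory.Adapted 𝒢 f ∧
  (∀ t ∈ Set.Icc (0:ℝ) T, MeasureTheory.Integrable (f t) μ) ∧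
  ∀ s t : ℝ, 0 ≤ s → s ≤ t → t ≤ T → μ[f t | 𝒢 s] =ᵐ[μ] f s

open Filter Topology MeasurableSpace

lemma abs_max_neg_min_le_abs {c : ℝ} (hc : 0 ≤ c) (x : ℝ) : |max (-c) (min c x)| ≤ |x| :=
  abs_le.2 ⟨le_max_of_le_right (le_min (by linarith [abs_nonneg x]) (neg_abs_le x)),
    max_le (by linarith [abs_nonneg x]) ((min_le_right _ _).trans (le_abs_self x))⟩

lemma abs_max_neg_min_le {c : ℝ} (hc : 0 ≤ c) (x : ℝ) : |max (-c) (min c x)| ≤ c :=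
  abs_le.2 ⟨le_max_left _ _, max_le (by linarith) (min_le_left _ _)⟩

lemma tendsto_max_neg_natCast_min_natCast (x : ℝ) :
    Tendsto (fun n : ℕ => max (-(n : ℝ)) (min (n : ℝ) x)) atTop (𝓝 x) := by
  refine tendsto_atTop_of_eventually_const (i₀ := ⌈|x|⌉₊) fun n hn => ?_
  have hxn : |x| ≤ n := (Nat.le_ceil _).trans (Nat.cast_le.mpr hn)
  rw [min_eq_right ((le_abs_self x).trans hxn),
    max_eq_right ((neg_le_neg hxn).trans (neg_abs_le x))]

lemma abs_indicator_one_le {α : Type*} (s : Set α) (x : α) :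
    |s.indicator (1 : α → ℝ) x| ≤ 1 := by
  simpa using norm_indicator_le_norm_self (1 : α → ℝ) (s := s) (a := x)

namespace MeasureTheory

theorem setIntegral_eq_of_isPiSystem {α E : Type*} [NormedAddCommGroup E] [NormedSpace ℝ E]
    {m m₀ : MeasurableSpace α} {μ : Measure[m₀] α} (hm : m ≤ m₀) {S : Set (Set α)}
    (hgen : m = generateFrom S) (hpi : IsPiSystem S) (huniv : univ ∈ S) {f g : α → E}
    (hf : Integrable f μ) (hg : Integrable g μ)
    (h : ∀ A ∈ S, ∫ x in A, f x ∂μ = ∫ x in A, g x ∂μ) {A : Set α} (hA : MeasurableSet[m] A) :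
    ∫ x in A, f x ∂μ = ∫ x in A, g x ∂μ := by
  have htotal : ∫ x, f x ∂μ = ∫ x, g x ∂μ := by simpa using h univ huniv
  induction A, hA using induction_on_inter hgen hpi with
  | empty => simp
  | basic A hA => exact h A hA
  | compl A hA ih =>
    rw [setIntegral_compl (hm A hA) hf, setIntegral_compl (hm A hA) hg, htotal, ih]
  | iUnion A hdisj hA ih =>
    rw [integral_iUnion (fun n => hm _ (hA n)) hdisj hf.integrableOn,
      integral_iUnion (fun n => hm _ (hA n)) hdisj hg.integrableOn]
    exact tsum_congr ih

theorem isPiSystem_image2_inter {α : Type*} (m₁ m₂ : MeasurableSpace α) :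
    IsPiSystem (image2 (· ∩ ·) {s | MeasurableSet[m₁] s} {t | MeasurableSet[m₂] t}) := by
  rintro _ ⟨s₁, hs₁, t₁, ht₁, rfl⟩ _ ⟨s₂, hs₂, t₂, ht₂, rfl⟩ -
  exact ⟨s₁ ∩ s₂, hs₁.inter hs₂, t₁ ∩ t₂, ht₁.inter ht₂, inter_inter_inter_comm _ _ _ _⟩

theorem univ_mem_image2_inter {α : Type*} (m₁ m₂ : MeasurableSpace α) :
    univ ∈ image2 (· ∩ ·) {s | MeasurableSet[m₁] s} {t | MeasurableSet[m₂] t} :=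
  ⟨univ, MeasurableSet.univ, univ, MeasurableSet.univ, univ_inter univ⟩

theorem generateFrom_image2_inter {α : Type*} (m₁ m₂ : MeasurableSpace α) :
    generateFrom (image2 (· ∩ ·) {s | MeasurableSet[m₁] s} {t | MeasurableSet[m₂] t})
      = m₁ ⊔ m₂ := by
  refine le_antisymm (generateFrom_le ?_) (sup_le (fun s hs => ?_) (fun t ht => ?_))
  · rintro _ ⟨s, hs, t, ht, rfl⟩
    exact (le_sup_left (b := m₂) s hs).inter (le_sup_right (a := m₁) t ht)
  · exact measurableSet_generateFrom ⟨s, hs, univ, .univ, inter_univ s⟩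
  · exact measurableSet_generateFrom ⟨univ, .univ, t, ht, univ_inter t⟩

theorem martingaleOn_of_setIntegral_eq {α : Type*} {m₀ : MeasurableSpace α} {μ : Measure α}
    [IsFiniteMeasure μ] {𝒢 : Filtration ℝ m₀} {f : ℝ → α → ℝ} {T : ℝ} (hadapt : Adapted 𝒢 f)
    (hint : ∀ t ∈ Icc 0 T, Integrable (f t) μ) (S : ℝ → Set (Set α))
    (hgen : ∀ s, 𝒢 s = generateFrom (S s)) (hpi : ∀ s, IsPiSystem (S s))
    (huniv : ∀ s, univ ∈ S s)
    (h : ∀ s t, 0 ≤ s → s ≤ t → t ≤ T → ∀ A ∈ S s, ∫ x in A, f t x ∂μ = ∫ x in A, f s x ∂μ) :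
    MartingaleOn f 𝒢 μ T := by
  refine ⟨hadapt, hint, fun s t hs hst htT => ?_⟩
  have hsI : s ∈ Icc 0 T := ⟨hs, hst.trans htT⟩
  have htI : t ∈ Icc 0 T := ⟨hs.trans hst, htT⟩
  refine (ae_eq_condExp_of_forall_setIntegral_eq (𝒢.le s) (hint t htI)
    (fun A _ _ => (hint s hsI).integrableOn) (fun A hA _ => ?_)
    (hadapt s).aestronglyMeasurable).symm
  exact (setIntegral_eq_of_isPiSystem (𝒢.le s) (hgen s) (hpi s) (huniv s) (hint t htI)
    (hint s hsI) (h s t hs hst htT) hA).symm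

theorem martingaleOn_const {α : Type*} {m₀ : MeasurableSpace α} {μ : Measure α}
    [IsFiniteMeasure μ] (𝒢 : Filtration ℝ m₀) (c T : ℝ) :
    MartingaleOn (fun _ _ => c) 𝒢 μ T :=
  ⟨fun _ => measurable_const, fun _ _ => integrable_const c,
    fun s _ _ _ _ => by rw [condExp_const (𝒢.le s)]⟩

theorem integral_mul_eq_of_condExp_ae_eq {α : Type*} {m m₀ : MeasurableSpace α}
    {μ : Measure[m₀] α} (hm : m ≤ m₀) [SigmaFinite (μ.trim hm)] {φ f g : α → ℝ}
    (hφ : AEStronglyMeasurable[m] φ μ) (hφf : Integrable (φ * f) μ) (hf : Integrable f μ)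
    (hfg : μ[f | m] =ᵐ[μ] g) :
    ∫ x, φ x * f x ∂μ = ∫ x, φ x * g x ∂μ := by
  refine (integral_condExp hm (f := φ * f)).symm.trans (integral_congr_ae ?_)
  filter_upwards [condExp_mul_of_aestronglyMeasurable_left hφ hφf hf, hfg] with x h₁ h₂
  rw [h₁, Pi.mul_apply, h₂]

theorem Measure.QuasiMeasurePreserving.aestronglyMeasurable_comp_comap {α β γ : Type*}
    [TopologicalSpace γ] {m : MeasurableSpace β} {mα : MeasurableSpace α} {mβ : MeasurableSpace β}
    {μ : Measure α} {ν : Measure β} {f : α → β} (hf : Measure.QuasiMeasurePreserving f μ ν)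
    {g : β → γ} (hg : AEStronglyMeasurable[m] g ν) :
    AEStronglyMeasurable[m.comap f] (g ∘ f) μ := by
  obtain ⟨g', hg', hae⟩ := hg
  exact ⟨g' ∘ f, hg'.comp_measurable (comap_measurable f), hf.ae_eq hae⟩

section CompProd

variable {α β : Type*} {mα : MeasurableSpace α} {mβ : MeasurableSpace β} {μ : Measure α}
  {κ : Kernel α β}

theorem Measure.measurePreserving_fst_compProd [SFinite μ] [IsMarkovKernel κ] :
    MeasurePreserving Prod.fst (μ ⊗ₘ κ) μ :=
  ⟨measurable_fst, Measure.fst_compProd μ κ⟩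

theorem Measure.integral_comp_fst_compProd [SFinite μ] [IsMarkovKernel κ] {E : Type*}
    [NormedAddCommGroup E] [NormedSpace ℝ E] {φ : α → E} (hφ : AEStronglyMeasurable φ μ) :
    ∫ p, φ p.1 ∂(μ ⊗ₘ κ) = ∫ a, φ a ∂μ := by
  have hmap := (Measure.measurePreserving_fst_compProd (μ := μ) (κ := κ)).map_eq
  rw [← hmap] at hφ
  rw [← integral_map measurable_fst.aemeasurable hφ, hmap]

theorem Integrable.integral_measure_compProd [SFinite μ] [IsSFiniteKernel κ] {E : Type*}
    [NormedAddCommGroup E] [NormedSpace ℝ E] {f : α × β → E} (hf : Integrable f (μ ⊗ₘ κ)) :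
    Integrable (fun a => ∫ b, f (a, b) ∂κ a) μ := by
  rw [Measure.compProd] at hf
  simpa using hf.integral_compProd

theorem indicator_preimage_inter_fst_mul {E : Type*} {X : α × β → E} {B : Set E} {F : Set α}
    (f : α × β → ℝ) (v : α → ℝ) (p : α × β) :
    (X ⁻¹' B ∩ Prod.fst ⁻¹' F).indicator (fun p => f p * v p.1) p
      = F.indicator v p.1 * (f p * B.indicator 1 (X p)) := by
  by_cases h₁ : X p ∈ B <;> by_cases h₂ : p.1 ∈ F <;> simp [h₁, h₂, mul_comm]

theorem setIntegral_preimage_inter_fst_compProd [SFinite μ] [IsSFiniteKernel κ] {E : Type*}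
    [MeasurableSpace E] {X : α × β → E} (hX : Measurable X) {B : Set E} (hB : MeasurableSet B)
    {F : Set α} (hF : MeasurableSet F) {f : α × β → ℝ} {v : α → ℝ}
    (hint : Integrable (fun p => f p * v p.1) (μ ⊗ₘ κ)) :
    ∫ p in X ⁻¹' B ∩ Prod.fst ⁻¹' F, f p * v p.1 ∂(μ ⊗ₘ κ)
        = ∫ a, F.indicator v a * ∫ b, f (a, b) * B.indicator 1 (X (a, b)) ∂κ a ∂μ ∧
      Integrable (fun a => F.indicator v a * ∫ b, f (a, b) * B.indicator 1 (X (a, b)) ∂κ a) μ := by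
  have hA : MeasurableSet (X ⁻¹' B ∩ Prod.fst ⁻¹' F) := (hX hB).inter (measurable_fst hF)
  have hind := funext (indicator_preimage_inter_fst_mul (X := X) (B := B) (F := F) f v)
  have hint' := hind ▸ hint.indicator hA
  refine ⟨?_, by simpa only [integral_const_mul] using hint'.integral_measure_compProd⟩
  rw [← integral_indicator hA, hind, Measure.integral_compProd hint']
  simp only [integral_const_mul]

end CompProd

/- `𝒢` is a filtration rather than a σ-algebra on `α × β`, which would become the local instance
used by `μ ⊗ₘ κ`. -/
theorem integral_mul_eq_of_condExp_comp_fst {ι α β : Type*} [Preorder ι]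
    {m mα : MeasurableSpace α} {mβ : MeasurableSpace β} {μ : Measure α} [IsFiniteMeasure μ]
    {κ : Kernel α β} [IsMarkovKernel κ]
    {𝒢 : Filtration ι (inferInstance : MeasurableSpace (α × β))} {i : ι}
    (hm : m.comap Prod.fst ≤ 𝒢 i) {ψ v w : α → ℝ} (hψ : AEStronglyMeasurable[m] ψ μ)
    (hψv : Integrable (ψ * v) μ) (hψw : Integrable (ψ * w) μ)
    (hv : Integrable (fun p => v p.1) (μ ⊗ₘ κ))
    (hvw : (μ ⊗ₘ κ)[fun p => v p.1 | 𝒢 i] =ᵐ[μ ⊗ₘ κ] fun p => w p.1) :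
    ∫ a, ψ a * v a ∂μ = ∫ a, ψ a * w a ∂μ := by
  have hfst := Measure.measurePreserving_fst_compProd (μ := μ) (κ := κ)
  calc ∫ a, ψ a * v a ∂μ = ∫ p, ψ p.1 * v p.1 ∂(μ ⊗ₘ κ) :=
        (Measure.integral_comp_fst_compProd hψv.1).symm
    _ = ∫ p, ψ p.1 * w p.1 ∂(μ ⊗ₘ κ) :=
        integral_mul_eq_of_condExp_ae_eq (𝒢.le i)
          ((hfst.quasiMeasurePreserving.aestronglyMeasurable_comp_comap hψ).mono hm)
          (hfst.integrable_comp_of_integrable hψv) hv hvw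
    _ = ∫ a, ψ a * w a ∂μ := Measure.integral_comp_fst_compProd hψw.1

theorem aestronglyMeasurable_integral_comp_of_forall_bounded {α β : Type*}
    {m mα : MeasurableSpace α} {mβ : MeasurableSpace β} {μ : Measure α} [SFinite μ]
    {κ : Kernel α β} [IsSFiniteKernel κ] {E : Type*} [MeasurableSpace E] {X : α × β → E}
    (hX : Measurable X)
    (h : ∀ 𝒜 : E → ℝ, Measurable 𝒜 → (∃ K, ∀ x, |𝒜 x| ≤ K) →
      Measurable[m] fun a => ∫ b, 𝒜 (X (a, b)) ∂(κ a))
    {𝒜 : E → ℝ} (h𝒜 : Measurable 𝒜) (hint : Integrable (fun p => 𝒜 (X p)) (μ ⊗ₘ κ)) :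
    AEStronglyMeasurable[m] (fun a => ∫ b, 𝒜 (X (a, b)) ∂(κ a)) μ := by
  set 𝒜ₙ : ℕ → E → ℝ := fun n x => max (-(n : ℝ)) (min (n : ℝ) (𝒜 x))
  have h𝒜ₙ : ∀ n, Measurable (𝒜ₙ n) := fun n => measurable_const.max (measurable_const.min h𝒜)
  have hlim : ∀ n, StronglyMeasurable[m] fun a => ∫ b, 𝒜ₙ n (X (a, b)) ∂(κ a) := fun n =>
    (h _ (h𝒜ₙ n) ⟨n, fun x => abs_max_neg_min_le n.cast_nonneg (𝒜 x)⟩).stronglyMeasurable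
  refine ⟨fun a => limUnder atTop fun n => ∫ b, 𝒜ₙ n (X (a, b)) ∂(κ a),
    by let := m; exact StronglyMeasurable.limUnder hlim, ?_⟩
  filter_upwards [((Measure.integrable_compProd_iff hint.1).mp hint).1] with a ha
  refine (Tendsto.limUnder_eq ?_).symm
  refine tendsto_integral_of_dominated_convergence (fun b => |𝒜 (X (a, b))|)
    (fun n => ((h𝒜ₙ n).comp (hX.comp measurable_prodMk_left)).aestronglyMeasurable) ha.abs
    (fun n => Eventually.of_forall fun b => abs_max_neg_min_le_abs n.cast_nonneg _)
    (Eventually.of_forall fun b => tendsto_max_neg_natCast_min_natCast _)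

end MeasureTheory

section WeakStrongSolution

open MeasureTheory

def stoppedPath {Ω' : Type*} (Y : ℝ → Ω' → ℝ) (s : ℝ) (p : Ω') : ℝ → ℝ :=
  fun r => Y (min r s) p

@[simp]
lemma stoppedPath_self {Ω' : Type*} (Y : ℝ → Ω' → ℝ) (s : ℝ) (p : Ω') :
    stoppedPath Y s p s = Y s p := by
  simp [stoppedPath]

variable {Ω Ω₁ : Type*} {mΩ : MeasurableSpace Ω} {mΩ₁ : MeasurableSpace Ω₁}
  {P : Measure Ω} [IsProbabilityMeasure P] {Q : Kernel Ω Ω₁} [IsMarkovKernel Q]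
  {ℱ : Filtration ℝ mΩ} {𝒢 : Filtration ℝ (inferInstance : MeasurableSpace (Ω × Ω₁))}
  {T : ℝ} {Y : ℝ → Ω × Ω₁ → ℝ}

lemma measurable_stoppedPath (hY : ∀ t, Measurable (Y t)) (s : ℝ) :
    Measurable (stoppedPath Y s) :=
  measurable_pi_lambda _ fun _ => hY _

lemma adapted_of_eq_comap_stoppedPath_sup
    (h𝒢 : ∀ s, 𝒢 s = MeasurableSpace.comap (stoppedPath Y s) MeasurableSpace.pi ⊔
      MeasurableSpace.comap Prod.fst (ℱ s)) : Adapted 𝒢 Y := by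
  intro u
  have hY : Measurable[MeasurableSpace.comap (stoppedPath Y u) MeasurableSpace.pi] (Y u) := by
    simpa only [Function.comp_def, stoppedPath_self] using
      (measurable_pi_apply u).comp (comap_measurable (stoppedPath Y u))
  exact hY.mono (h𝒢 u ▸ le_sup_left) le_rfl

theorem aestronglyMeasurable_integral_mul_indicator_stoppedPath
    (hYmeas : ∀ t, Measurable (Y t))
    (hmeas : ∀ s ∈ Icc (0 : ℝ) T, ∀ 𝒜 : (ℝ → ℝ) → ℝ, Measurable 𝒜 → (∃ K, ∀ f, |𝒜 f| ≤ K) →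
      Measurable[ℱ s] fun ω => ∫ ω₁, 𝒜 (stoppedPath Y s (ω, ω₁)) ∂(Q ω))
    (hYint : ∀ t ∈ Icc (0 : ℝ) T, Integrable (Y t) (P ⊗ₘ Q)) {s : ℝ} (hs : s ∈ Icc 0 T)
    {B : Set (ℝ → ℝ)} (hB : MeasurableSet B) :
    AEStronglyMeasurable[ℱ s]
      (fun ω => ∫ ω₁, Y s (ω, ω₁) * B.indicator 1 (stoppedPath Y s (ω, ω₁)) ∂(Q ω)) P := by
  have hX := measurable_stoppedPath hYmeas s
  have hYs : Integrable (fun p => Y s p * B.indicator 1 (stoppedPath Y s p)) (P ⊗ₘ Q) := by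
    refine ((hYint s hs).indicator (hX hB)).congr (Eventually.of_forall fun p => ?_)
    by_cases hp : stoppedPath Y s p ∈ B <;> simp [hp]
  simpa only [stoppedPath_self] using
    aestronglyMeasurable_integral_comp_of_forall_bounded hX (hmeas s hs)
      (𝒜 := fun f => f s * B.indicator 1 f)
      ((measurable_pi_apply s).mul (measurable_one.indicator hB))
      (by simpa only [stoppedPath_self] using hYs)

theorem setIntegral_mul_eq_of_quenched (hYmeas : ∀ t, Measurable (Y t))
    (hquenched : ∀ᵐ ω ∂P, ∀ s t : ℝ, 0 ≤ s → s ≤ t → t ≤ T →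
      ∀ 𝒜 : (ℝ → ℝ) → ℝ, Measurable 𝒜 → (∃ K, ∀ f, |𝒜 f| ≤ K) →
        ∫ ω₁, Y t (ω, ω₁) * 𝒜 (stoppedPath Y s (ω, ω₁)) ∂(Q ω)
          = ∫ ω₁, Y s (ω, ω₁) * 𝒜 (stoppedPath Y s (ω, ω₁)) ∂(Q ω))
    (hmeas : ∀ s ∈ Icc (0 : ℝ) T, ∀ 𝒜 : (ℝ → ℝ) → ℝ, Measurable 𝒜 → (∃ K, ∀ f, |𝒜 f| ≤ K) →
      Measurable[ℱ s] fun ω => ∫ ω₁, 𝒜 (stoppedPath Y s (ω, ω₁)) ∂(Q ω))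
    (hYint : ∀ t ∈ Icc (0 : ℝ) T, Integrable (Y t) (P ⊗ₘ Q))
    (hℱ : ∀ s, MeasurableSpace.comap Prod.fst (ℱ s) ≤ 𝒢 s)
    {V : ℝ → Ω → ℝ} (hV : MartingaleOn (fun t p => V t p.1) 𝒢 (P ⊗ₘ Q) T)
    (hYV : ∀ t ∈ Icc (0 : ℝ) T, Integrable (fun p => Y t p * V t p.1) (P ⊗ₘ Q))
    {s t : ℝ} (hs : 0 ≤ s) (hst : s ≤ t) (htT : t ≤ T)
    {B : Set (ℝ → ℝ)} (hB : MeasurableSet B) {F : Set Ω} (hF : MeasurableSet[ℱ s] F) :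
    ∫ p in stoppedPath Y s ⁻¹' B ∩ Prod.fst ⁻¹' F, Y t p * V t p.1 ∂(P ⊗ₘ Q)
      = ∫ p in stoppedPath Y s ⁻¹' B ∩ Prod.fst ⁻¹' F, Y s p * V s p.1 ∂(P ⊗ₘ Q) := by
  have hsI : s ∈ Icc 0 T := ⟨hs, hst.trans htT⟩
  have htI : t ∈ Icc 0 T := ⟨hs.trans hst, htT⟩
  have hX := measurable_stoppedPath hYmeas s
  set g : ℝ → Ω → ℝ := fun u ω =>
    ∫ ω₁, Y u (ω, ω₁) * B.indicator 1 (stoppedPath Y s (ω, ω₁)) ∂(Q ω)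
  have hg : g t =ᵐ[P] g s := by
    filter_upwards [hquenched] with ω hω
    exact hω s t hs hst htT _ (measurable_one.indicator hB) ⟨1, abs_indicator_one_le B⟩
  have hψ : AEStronglyMeasurable[ℱ s] (F.indicator (g s)) P := by
    obtain ⟨g', hg', hae⟩ :=
      aestronglyMeasurable_integral_mul_indicator_stoppedPath hYmeas hmeas hYint hsI hB
    exact ⟨F.indicator g', hg'.indicator hF, hae.indicator⟩
  have hswap : ∀ (u : ℝ) (h : Ω → ℝ) (ω : Ω),
      F.indicator (V u) ω * h ω = (F.indicator h * V u) ω := by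
    intro u h ω
    by_cases hω : ω ∈ F <;> simp [hω, mul_comm]
  have hswap_t : (fun ω => F.indicator (V t) ω * g t ω) =ᵐ[P] F.indicator (g s) * V t :=
    hg.mono fun ω hω => (congrArg _ hω).trans (hswap t (g s) ω)
  obtain ⟨heq_t, hint_t⟩ :=
    setIntegral_preimage_inter_fst_compProd hX hB (ℱ.le s F hF) (hYV t htI)
  obtain ⟨heq_s, hint_s⟩ :=
    setIntegral_preimage_inter_fst_compProd hX hB (ℱ.le s F hF) (hYV s hsI)
  have hswap_s := Eventually.of_forall (f := ae P) (hswap s (g s))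
  rw [heq_t, heq_s]
  calc _ = ∫ ω, (F.indicator (g s) * V t) ω ∂P := integral_congr_ae hswap_t
    _ = ∫ ω, (F.indicator (g s) * V s) ω ∂P :=
      integral_mul_eq_of_condExp_comp_fst (hℱ s) hψ (hint_t.congr hswap_t)
        (hint_s.congr hswap_s) (hV.2.1 t htI) (hV.2.2 s t hs hst htT)
    _ = _ := (integral_congr_ae hswap_s).symm

theorem martingaleOn_mul_comp_fst_of_quenched (hYmeas : ∀ t, Measurable (Y t))
    (h𝒢 : ∀ s, 𝒢 s = MeasurableSpace.comap (stoppedPath Y s) MeasurableSpace.pi ⊔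
      MeasurableSpace.comap Prod.fst (ℱ s))
    (hquenched : ∀ᵐ ω ∂P, ∀ s t : ℝ, 0 ≤ s → s ≤ t → t ≤ T →
      ∀ 𝒜 : (ℝ → ℝ) → ℝ, Measurable 𝒜 → (∃ K, ∀ f, |𝒜 f| ≤ K) →
        ∫ ω₁, Y t (ω, ω₁) * 𝒜 (stoppedPath Y s (ω, ω₁)) ∂(Q ω)
          = ∫ ω₁, Y s (ω, ω₁) * 𝒜 (stoppedPath Y s (ω, ω₁)) ∂(Q ω))
    (hmeas : ∀ s ∈ Icc (0 : ℝ) T, ∀ 𝒜 : (ℝ → ℝ) → ℝ, Measurable 𝒜 → (∃ K, ∀ f, |𝒜 f| ≤ K) →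
      Measurable[ℱ s] fun ω => ∫ ω₁, 𝒜 (stoppedPath Y s (ω, ω₁)) ∂(Q ω))
    (hYint : ∀ t ∈ Icc (0 : ℝ) T, Integrable (Y t) (P ⊗ₘ Q))
    {V : ℝ → Ω → ℝ} (hV : MartingaleOn (fun t p => V t p.1) 𝒢 (P ⊗ₘ Q) T)
    (hYV : ∀ t ∈ Icc (0 : ℝ) T, Integrable (fun p => Y t p * V t p.1) (P ⊗ₘ Q)) :
    MartingaleOn (fun t p => Y t p * V t p.1) 𝒢 (P ⊗ₘ Q) T := by
  refine martingaleOn_of_setIntegral_eq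
    (fun u => (adapted_of_eq_comap_stoppedPath_sup h𝒢 u).mul (hV.1 u)) hYV
    (fun s => image2 (· ∩ ·) {B | MeasurableSet[.comap (stoppedPath Y s) .pi] B}
      {F | MeasurableSet[.comap Prod.fst (ℱ s)] F})
    (fun s => (h𝒢 s).trans (generateFrom_image2_inter _ _).symm)
    (fun s => isPiSystem_image2_inter _ _) (fun s => univ_mem_image2_inter _ _) ?_
  rintro s t hs hst htT _ ⟨_, ⟨B, hB, rfl⟩, _, ⟨F, hF, rfl⟩, rfl⟩
  exact setIntegral_mul_eq_of_quenched hYmeas hquenched hmeas hYint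
    (fun s => h𝒢 s ▸ le_sup_right) hV hYV hs hst htT hB hF

end WeakStrongSolution

theorem weak_strong_solution_product_martingale_general
    {Ω Ω₁ : Type*} {mΩ : MeasurableSpace Ω} {mΩ₁ : MeasurableSpace Ω₁}
    (P : Measure Ω) [IsProbabilityMeasure P]
    (Q : Kernel Ω Ω₁) [IsMarkovKernel Q]
    (ℱ : MeasureTheory.Filtration ℝ mΩ)
    (𝒢 : MeasureTheory.Filtration ℝ (inferInstance : MeasurableSpace (Ω × Ω₁)))
    (T : ℝ) (nN : ℕ)
    (W : Fin nN → ℝ → Ω → ℝ)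
    (Y : ℝ → Ω × Ω₁ → ℝ) (hYmeas : ∀ t, Measurable (Y t))
    (h𝒢 : ∀ s : ℝ, 𝒢 s =
      MeasurableSpace.comap (fun p : Ω × Ω₁ => fun r : ℝ => Y (min r s) p)
        MeasurableSpace.pi ⊔ MeasurableSpace.comap Prod.fst (ℱ s))
    (hWmart : ∀ i, MartingaleOn (fun t p => W i t p.1) 𝒢 (P ⊗ₘ Q) T)
    (hquenched : ∀ᵐ ω ∂P, ∀ s t : ℝ, 0 ≤ s → s ≤ t → t ≤ T →
      ∀ 𝒜 : (ℝ → ℝ) → ℝ, Measurable 𝒜 → (∃ K, ∀ f, |𝒜 f| ≤ K) →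
        ∫ ω₁, Y t (ω, ω₁) * 𝒜 (fun r => Y (min r s) (ω, ω₁)) ∂(Q ω)
          = ∫ ω₁, Y s (ω, ω₁) * 𝒜 (fun r => Y (min r s) (ω, ω₁)) ∂(Q ω))
    (hmeas3 : ∀ s ∈ Set.Icc (0:ℝ) T,
      ∀ 𝒜 : (ℝ → ℝ) → ℝ, Measurable 𝒜 → (∃ K, ∀ f, |𝒜 f| ≤ K) →
        Measurable[ℱ s] fun ω => ∫ ω₁, 𝒜 (fun r => Y (min r s) (ω, ω₁)) ∂(Q ω))
    (hYint : ∀ t ∈ Set.Icc (0:ℝ) T, Integrable (Y t) (P ⊗ₘ Q))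
    (hYWint : ∀ i, ∀ t ∈ Set.Icc (0:ℝ) T,
      Integrable (fun p => Y t p * W i t p.1) (P ⊗ₘ Q)) :
    MartingaleOn Y 𝒢 (P ⊗ₘ Q) T ∧
    ∀ i, MartingaleOn (fun t p => Y t p * W i t p.1) 𝒢 (P ⊗ₘ Q) T := by
  have hmart := fun {V : ℝ → Ω → ℝ} =>
    martingaleOn_mul_comp_fst_of_quenched (V := V) hYmeas h𝒢 hquenched hmeas3 hYint
  refine ⟨?_, fun i => hmart (hWmart i) (hYWint i)⟩
  simpa only [mul_one] using
    hmart (V := fun _ _ => 1) (martingaleOn_const 𝒢 1 T) (by simpa only [mul_one] using hYint)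

/-- Proposition 2.11: let Y be a weak-strong solution of
(DSDE)(γ,x₀): for P-a.e. ω the process Y(·,ω) is a Q^ω-martingale (expressed by
integration against bounded measurable functionals of the path of Y stopped at
time s); the Wⁱ are (𝒢_t)-martingales on the product space 𝐐 = P ⊗ₘ Q; the
kernel expectations of functionals of the stopped path are ℱ_s-measurable; and
𝒢_s is generated by the path of Y stopped at s together with {∅,Ω₁} ⊗ ℱ_s.
Then (1) Y is a (𝒢_t)-martingale on (Ω₀,𝒢,𝐐) and (2) [Y,Wⁱ] = 0 for 1 ≤ i ≤ N,
encoded as: each product Y·Wⁱ is a (𝒢_t)-martingale on the product space. -/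
theorem weak_strong_solution_product_martingale
    {Ω Ω₁ : Type*} {mΩ : MeasurableSpace Ω} {mΩ₁ : MeasurableSpace Ω₁}
    (P : Measure Ω) [IsProbabilityMeasure P]
    (Q : Kernel Ω Ω₁) [IsMarkovKernel Q]
    (ℱ : MeasureTheory.Filtration ℝ mΩ)
    (𝒢 : MeasureTheory.Filtration ℝ (inferInstance : MeasurableSpace (Ω × Ω₁)))
    (T : ℝ) (hT : 0 ≤ T) (nN : ℕ)
    (W : Fin nN → ℝ → Ω → ℝ) (hWmeas : ∀ i t, Measurable (W i t))
    (Y : ℝ → Ω × Ω₁ → ℝ) (hYmeas : ∀ t, Measurable (Y t))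
    (h𝒢 : ∀ s : ℝ, 𝒢 s =
      MeasurableSpace.comap (fun p : Ω × Ω₁ => fun r : ℝ => Y (min r s) p)
        MeasurableSpace.pi ⊔ MeasurableSpace.comap Prod.fst (ℱ s))
    (hWmart : ∀ i, MartingaleOn (fun t p => W i t p.1) 𝒢 (P ⊗ₘ Q) T)
    (hquenched : ∀ᵐ ω ∂P, ∀ s t : ℝ, 0 ≤ s → s ≤ t → t ≤ T →
      ∀ 𝒜 : (ℝ → ℝ) → ℝ, Measurable 𝒜 → (∃ K, ∀ f, |𝒜 f| ≤ K) →
        ∫ ω₁, Y t (ω, ω₁) * 𝒜 (fun r => Y (min r s) (ω, ω₁)) ∂(Q ω)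
          = ∫ ω₁, Y s (ω, ω₁) * 𝒜 (fun r => Y (min r s) (ω, ω₁)) ∂(Q ω))
    (hmeas3 : ∀ s ∈ Set.Icc (0:ℝ) T,
      ∀ 𝒜 : (ℝ → ℝ) → ℝ, Measurable 𝒜 → (∃ K, ∀ f, |𝒜 f| ≤ K) →
        Measurable[ℱ s] fun ω => ∫ ω₁, 𝒜 (fun r => Y (min r s) (ω, ω₁)) ∂(Q ω))
    (hYint : ∀ t ∈ Set.Icc (0:ℝ) T, Integrable (Y t) (P ⊗ₘ Q))
    (hYWint : ∀ i, ∀ t ∈ Set.Icc (0:ℝ) T,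
      Integrable (fun p => Y t p * W i t p.1) (P ⊗ₘ Q)) :
    MartingaleOn Y 𝒢 (P ⊗ₘ Q) T ∧
    ∀ i, MartingaleOn (fun t p => Y t p * W i t p.1) 𝒢 (P ⊗ₘ Q) T :=
  weak_strong_solution_product_martingale_general (mΩ₁ := mΩ₁) P Q ℱ 𝒢 T nN W Y hYmeas h𝒢 hWmart
    hquenched hmeas3 hYint hYWint
end

section
/- Let (μ_n) be a sequence of finite measures on a metric space S and μ a finite measure on S, all with total mass uniformly bounded. Suppose there are compact sets K_m ⊂ S with μ_n(K_m^c) < 1/m for all n and μ(K_m^c) < 1/m, and suppose that ∫ g dμ_n → ∫ g dμ for every bounded continuous g : S → ℝ. Let F : S → ℝ be bounded and continuous. Then ∫ F dμ_n → ∫ F dμ. More generally (Corollary 7.7 of the paper): if Q^{κ_n}(·,ω) are random probability kernels converging in the stable sense to Q(·,ω), and F : Ω₁ × Ω → ℝ is bounded, measurable, and ω-a.s. continuous in the first variable, then ∫_Ω dP(ω) ∫_{Ω₁} F(ω₁,ω) (Q^{κ_n}(dω₁,ω) − Q(dω₁,ω)) → 0. -/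
/-!
Pass to the measures `P ⊗ₘ Qₙ` and `P ⊗ₘ Q` on `Ω × Ω₁`: they share the first marginal `P`, and
their second marginals are tight. Given `ε`, pick a compact `K` outside of which they all have
mass at most `ε`, a finite cover of `K` by `δ`-balls centred in `K`, and a subordinate partition
of unity `(ρₜ)`. On `K`, `H(ω, x) = ∑ₜ ρₜ(x) F(t, ω)` differs from `F(x, ω)` by at most the
`δ`-modulus of continuity of `F(·, ω)` on `K`; off `K`, by at most `2 sup |F|`. For `P`-a.e. `ω`
the modulus tends to `0` with `δ`, so by dominated convergence its `P`-integral is small for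
small `δ` (computed over a countable dense subset of `K`, it is measurable). Finally
`∫ H d(P ⊗ₘ Qₙ) → ∫ H d(P ⊗ₘ Q)` by stable convergence, `H` being a finite sum of products
`R(ω) G(x)`.
-/

open MeasureTheory ProbabilityTheory Filter Set Metric Topology
open scoped ENNReal BoundedContinuousFunction

theorem tendsto_of_forall_dist_le {ι α : Type*} [PseudoMetricSpace α] {l : Filter ι}
    {a : ι → α} {a' : α}
    (h : ∀ ε > 0, ∃ b : ι → α, ∃ b', Tendsto b l (𝓝 b') ∧
      (∀ᶠ i in l, dist (a i) (b i) ≤ ε) ∧ dist a' b' ≤ ε) :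
    Tendsto a l (𝓝 a') := by
  refine Metric.tendsto_nhds.2 fun ε hε => ?_
  obtain ⟨b, b', hb, hab, hab'⟩ := h (ε / 4) (by positivity)
  filter_upwards [Metric.tendsto_nhds.1 hb (ε / 4) (by positivity), hab] with i hbi hai
  calc dist (a i) a' ≤ dist (a i) (b i) + dist (b i) b' + dist b' a' := dist_triangle4 _ _ _ _
    _ < ε := by rw [dist_comm b']; linarith

theorem edist_le_ofReal_two_mul {E : Type*} [SeminormedAddCommGroup E] {a b : E} {C : ℝ}
    (ha : ‖a‖ ≤ C) (hb : ‖b‖ ≤ C) : edist a b ≤ ENNReal.ofReal (2 * C) :=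
  (edist_le_ofReal (by linarith [norm_nonneg a])).2 <|
    (dist_le_norm_add_norm a b).trans (by linarith)

section ModulusOfContinuity

variable {X Y : Type*} [PseudoMetricSpace X] [PseudoEMetricSpace Y]

noncomputable def modulusOn (g : X → Y) (s : Set X) (δ : ℝ) : ℝ≥0∞ :=
  ⨆ x ∈ s, ⨆ y ∈ s, ⨆ (_ : dist x y < δ), edist (g x) (g y)

theorem edist_le_modulusOn {g : X → Y} {s : Set X} {δ : ℝ} {x y : X} (hx : x ∈ s) (hy : y ∈ s)
    (hxy : dist x y < δ) : edist (g x) (g y) ≤ modulusOn g s δ :=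
  le_iSup₂_of_le x hx <| le_iSup₂_of_le y hy <| le_iSup_of_le hxy le_rfl

theorem modulusOn_le_of_forall_edist_le {g : X → Y} {s : Set X} {δ : ℝ} {C : ℝ≥0∞}
    (h : ∀ x y, edist (g x) (g y) ≤ C) : modulusOn g s δ ≤ C :=
  iSup₂_le fun x _ => iSup₂_le fun y _ => iSup_le fun _ => h x y

theorem modulusOn_le_of_subset_closure {g : X → Y} (hg : Continuous g) {s t : Set X}
    (hst : s ⊆ closure t) (δ : ℝ) : modulusOn g s δ ≤ modulusOn g t δ := by
  set A : Set (X × X) := {p | δ ≤ dist p.1 p.2} ∪ {p | edist (g p.1) (g p.2) ≤ modulusOn g t δ}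
  have hA : IsClosed A :=
    (isClosed_le continuous_const continuous_dist).union
      (isClosed_le (by fun_prop) continuous_const)
  have htA : t ×ˢ t ⊆ A := fun p ⟨h₁, h₂⟩ =>
    (le_or_gt δ (dist p.1 p.2)).imp id fun h => edist_le_modulusOn h₁ h₂ h
  refine iSup₂_le fun x hx => iSup₂_le fun y hy => iSup_le fun hxy => ?_
  have : (x, y) ∈ A := hA.closure_subset_iff.2 htA <| by
    rw [closure_prod_eq]; exact ⟨hst hx, hst hy⟩
  exact this.resolve_left hxy.not_ge

theorem tendsto_modulusOn_zero {g : X → Y} {s : Set X} (hs : IsCompact s) (hg : ContinuousOn g s) :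
    Tendsto (modulusOn g s) (𝓝 0) (𝓝 0) := by
  refine ENNReal.tendsto_nhds_zero.2 fun ε hε => ?_
  obtain ⟨δ₀, hδ₀, hg⟩ :=
    EMetric.uniformContinuousOn_iff.1 (hs.uniformContinuousOn_of_continuous hg) ε hε
  have : ∀ᶠ δ in 𝓝 (0 : ℝ), ENNReal.ofReal δ < δ₀ :=
    ENNReal.continuous_ofReal.tendsto' 0 0 ENNReal.ofReal_zero |>.eventually (gt_mem_nhds hδ₀)
  filter_upwards [this] with δ hδ
  refine iSup₂_le fun x hx => iSup₂_le fun y hy => iSup_le fun hxy => (hg hx hy ?_).le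
  rw [edist_dist]
  exact (ENNReal.ofReal_le_ofReal hxy.le).trans_lt hδ

variable {Ω : Type*} [MeasurableSpace Ω] [MeasurableSpace Y] [OpensMeasurableSpace Y]
  [SecondCountableTopology Y]

theorem measurable_modulusOn {g : Ω → X → Y} (hg : ∀ x, Measurable fun ω => g ω x) {s : Set X}
    (hs : s.Countable) (δ : ℝ) : Measurable fun ω => modulusOn (g ω) s δ :=
  .biSup _ hs fun x _ => .biSup _ hs fun y _ => .iSup fun _ => (hg x).edist (hg y)

end ModulusOfContinuity

theorem exists_measurable_modulus_lintegral_le {Ω X Y : Type*} [MeasurableSpace Ω]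
    [PseudoMetricSpace X] [PseudoEMetricSpace Y] [MeasurableSpace Y] [OpensMeasurableSpace Y]
    [SecondCountableTopology Y] {P : Measure Ω} [IsFiniteMeasure P] {g : Ω → X → Y}
    (hg : ∀ x, Measurable fun ω => g ω x) {C : ℝ≥0∞} (hC : C ≠ ∞)
    (hgC : ∀ ω x y, edist (g ω x) (g ω y) ≤ C) (hgc : ∀ᵐ ω ∂P, Continuous (g ω))
    {K : Set X} (hK : IsCompact K) {η : ℝ≥0∞} (hη : 0 < η) :
    ∃ δ > 0, ∃ e : Ω → ℝ≥0∞, Measurable e ∧ ∫⁻ ω, e ω ∂P ≤ η ∧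
      ∀ᵐ ω ∂P, ∀ x ∈ K, ∀ y ∈ K, dist x y < δ → edist (g ω x) (g ω y) ≤ e ω := by
  obtain ⟨D, hDK, hD, hKD⟩ := hK.isSeparable.exists_countable_dense_subset
  set e : ℕ → Ω → ℝ≥0∞ := fun k ω => modulusOn (g ω) D (1 / (k + 1))
  have he : ∀ k, Measurable (e k) := fun k => measurable_modulusOn hg hD _
  have h_lim : Tendsto (fun k => ∫⁻ ω, e k ω ∂P) atTop (𝓝 0) := by
    rw [← lintegral_zero]
    refine tendsto_lintegral_of_dominated_convergence (fun _ => C) he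
      (fun k => ae_of_all _ fun ω => modulusOn_le_of_forall_edist_le (hgC ω))
      (by simpa using ENNReal.mul_ne_top hC (measure_ne_top P univ)) ?_
    filter_upwards [hgc] with ω hω
    refine tendsto_of_tendsto_of_tendsto_of_le_of_le tendsto_const_nhds
      ((tendsto_modulusOn_zero hK hω.continuousOn).comp
        tendsto_one_div_add_atTop_nhds_zero_nat) (fun _ => zero_le) fun k => ?_
    exact modulusOn_le_of_subset_closure hω (hDK.trans subset_closure) _
  obtain ⟨k, hk⟩ := (h_lim.eventually (ge_mem_nhds hη)).exists
  refine ⟨1 / (k + 1), by positivity, e k, he k, hk, ?_⟩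
  filter_upwards [hgc] with ω hω x hx y hy hxy
  exact (edist_le_modulusOn hx hy hxy).trans (modulusOn_le_of_subset_closure hω hKD _)

theorem IsCompact.exists_partitionOfUnity_isSubordinate_ball {X : Type*} [MetricSpace X]
    {K : Set X} (hK : IsCompact K) {δ : ℝ} (hδ : 0 < δ) :
    ∃ T : Finset X, ↑T ⊆ K ∧
      ∃ ρ : PartitionOfUnity T X K, ρ.IsSubordinate fun t => ball (t : X) δ := by
  obtain ⟨T, hTK, hT, hcover⟩ := hK.finite_cover_balls hδ
  refine ⟨hT.toFinset, by simpa using hTK, PartitionOfUnity.exists_isSubordinate hK.isClosed _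
    (fun _ => isOpen_ball) ?_⟩
  simpa [iUnion_subtype] using hcover

namespace PartitionOfUnity

variable {ι E : Type*} [Fintype ι] [NormedAddCommGroup E] [NormedSpace ℝ E]

theorem norm_sum_smul_le {X : Type*} [TopologicalSpace X] {s : Set X}
    (ρ : PartitionOfUnity ι X s) {g : ι → E} {C : ℝ} (hC : 0 ≤ C) (hg : ∀ i, ‖g i‖ ≤ C)
    (x : X) : ‖∑ i, ρ i x • g i‖ ≤ C := by
  have h_sum : ∑ i, ρ i x ≤ 1 := by simpa [finsum_eq_sum_of_fintype] using ρ.sum_le_one x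
  calc ‖∑ i, ρ i x • g i‖ ≤ ∑ i, ρ i x * C := norm_sum_le_of_le _ fun i _ => by
        rw [norm_smul, Real.norm_of_nonneg (ρ.nonneg i x)]
        exact mul_le_mul_of_nonneg_left (hg i) (ρ.nonneg i x)
    _ = (∑ i, ρ i x) * C := Finset.sum_mul .. |>.symm
    _ ≤ C := mul_le_of_le_one_left hC h_sum

theorem edist_sum_smul_le {X : Type*} [PseudoMetricSpace X] {s : Set X}
    (ρ : PartitionOfUnity ι X s) {c : ι → X} {δ : ℝ} (hρ : ρ.IsSubordinate fun i => ball (c i) δ)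
    {g : X → E} {M : ℝ≥0∞} {x : X} (hx : x ∈ s)
    (hg : ∀ i, dist x (c i) < δ → edist (g (c i)) (g x) ≤ M) :
    edist (∑ i, ρ i x • g (c i)) (g x) ≤ M := by
  rcases eq_or_ne M ∞ with rfl | hM
  · exact le_top
  rw [← ENNReal.ofReal_toReal hM, edist_le_ofReal ENNReal.toReal_nonneg,
    ← finsum_eq_sum_of_fintype, ← mem_closedBall]
  refine ρ.finsum_smul_mem_convex (g := fun i _ => g (c i)) hx (fun i hi => ?_)
    (convex_closedBall (g x) _)
  rw [mem_closedBall, ← edist_le_ofReal ENNReal.toReal_nonneg, ENNReal.ofReal_toReal hM]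
  exact hg i (mem_ball.1 (hρ i (subset_tsupport _ hi)))

end PartitionOfUnity

theorem edist_integral_le_of_edist_le_on {Ω X : Type*} [MeasurableSpace Ω] [MeasurableSpace X]
    {μ : Measure (Ω × X)} {f h : Ω × X → ℝ} (hf : Integrable f μ) (hh : Integrable h μ)
    {K : Set X} (hK : MeasurableSet K) {C : ℝ≥0∞} (hC : ∀ p, edist (f p) (h p) ≤ C)
    {e : Ω → ℝ≥0∞} (he : Measurable e)
    (hfh : ∀ᵐ ω ∂μ.fst, ∀ x ∈ K, edist (f (ω, x)) (h (ω, x)) ≤ e ω) :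
    edist (∫ p, f p ∂μ) (∫ p, h p ∂μ) ≤ ∫⁻ ω, e ω ∂μ.fst + C * μ.snd Kᶜ := by
  have h_tail : Measurable (Kᶜ.indicator fun _ => C) := measurable_const.indicator hK.compl
  rw [edist_eq_enorm_sub, ← integral_sub hf hh]
  calc ‖∫ p, f p - h p ∂μ‖ₑ ≤ ∫⁻ p, ‖f p - h p‖ₑ ∂μ := enorm_integral_le_lintegral_enorm _
    _ ≤ ∫⁻ p, e p.1 + Kᶜ.indicator (fun _ => C) p.2 ∂μ := by
      refine lintegral_mono_ae ?_
      filter_upwards [ae_of_ae_map measurable_fst.aemeasurable hfh] with ⟨ω, x⟩ hω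
      rw [← edist_eq_enorm_sub]
      by_cases hx : x ∈ K
      · exact (hω x hx).trans le_self_add
      · rw [indicator_of_mem (mem_compl hx)]
        exact (hC _).trans le_add_self
    _ = ∫⁻ ω, e ω ∂μ.fst + C * μ.snd Kᶜ := by
      rw [lintegral_add_left (by fun_prop), Measure.fst, Measure.snd,
        lintegral_map he measurable_fst, ← lintegral_indicator_const hK.compl,
        lintegral_map h_tail measurable_snd]

theorem exists_sum_mul_boundedContinuousFunction_edist_integral_le {Ω X : Type*}
    [MeasurableSpace Ω] [MetricSpace X] [MeasurableSpace X] [OpensMeasurableSpace X]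
    {P : Measure Ω} [IsFiniteMeasure P] {f : Ω × X → ℝ} (hf : Measurable f) {C : ℝ}
    (hfC : ∀ p, ‖f p‖ ≤ C) (hfc : ∀ᵐ ω ∂P, Continuous fun x => f (ω, x)) {K : Set X}
    (hK : IsCompact K) {η : ℝ≥0∞} (hη : 0 < η) :
    ∃ (T : Finset X) (G : T → X →ᵇ ℝ), ∀ (μ : Measure (Ω × X)) [IsFiniteMeasure μ], μ.fst = P →
      edist (∫ p, f p ∂μ) (∫ p, ∑ t : T, f (p.1, t) * G t p.2 ∂μ) ≤
        η + ENNReal.ofReal (2 * C) * μ.snd Kᶜ := by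
  obtain ⟨δ, hδ, e, he, he_int, hfe⟩ := exists_measurable_modulus_lintegral_le
    (g := fun ω x => f (ω, x)) (fun x => hf.comp measurable_prodMk_right) ENNReal.ofReal_ne_top
    (fun ω x y => edist_le_ofReal_two_mul (hfC _) (hfC _)) hfc hK hη
  obtain ⟨T, hTK, ρ, hρ⟩ := hK.exists_partitionOfUnity_isSubordinate_ball hδ
  let G : T → X →ᵇ ℝ := fun t => .ofNormedAddCommGroup (ρ t) (ρ t).continuous 1 fun x => by
    rw [Real.norm_of_nonneg (ρ.nonneg t x)]; exact ρ.le_one t x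
  refine ⟨T, G, fun μ _ hμ => ?_⟩
  set h : Ω × X → ℝ := fun p => ∑ t : T, ρ t p.2 • f (p.1, t)
  have h_eq : h = fun p => ∑ t : T, f (p.1, t) * G t p.2 :=
    funext fun p => Finset.sum_congr rfl fun t _ => mul_comm _ _
  have hh_le : ∀ p, ‖h p‖ ≤ C := fun p =>
    ρ.norm_sum_smul_le ((norm_nonneg _).trans (hfC p)) (fun t => hfC _) p.2
  have hfh_K : ∀ᵐ ω ∂μ.fst, ∀ x ∈ K, edist (f (ω, x)) (h (ω, x)) ≤ e ω := by
    rw [hμ]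
    filter_upwards [hfe] with ω hω x hx
    rw [edist_comm]
    exact ρ.edist_sum_smul_le (g := fun y => f (ω, y)) hρ hx fun t ht =>
      hω t (hTK t.2) x hx (by rwa [dist_comm])
  rw [← h_eq]
  refine (edist_integral_le_of_edist_le_on (.of_bound hf.aestronglyMeasurable C (ae_of_all _ hfC))
    (.of_bound (by fun_prop : Measurable h).aestronglyMeasurable C (ae_of_all _ hh_le))
    hK.measurableSet (fun p => edist_le_ofReal_two_mul (hfC p) (hh_le p)) he hfh_K).trans ?_
  rw [hμ]
  exact add_le_add he_int le_rfl

section StableConvergence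

variable {Ω X ι : Type*} [MeasurableSpace Ω] [MeasurableSpace X]

def StablyTendsto [TopologicalSpace X] (l : Filter ι) (ν : ι → Measure (Ω × X))
    (ν' : Measure (Ω × X)) : Prop :=
  ∀ (R : Ω → ℝ) (G : X →ᵇ ℝ), Measurable R → (∃ c, ∀ ω, |R ω| ≤ c) →
    Tendsto (fun i => ∫ p, R p.1 * G p.2 ∂ν i) l (𝓝 (∫ p, R p.1 * G p.2 ∂ν'))

theorem integrable_mul_boundedContinuousFunction [TopologicalSpace X] [OpensMeasurableSpace X]
    {μ : Measure (Ω × X)} [IsFiniteMeasure μ] {R : Ω → ℝ} (hR : Measurable R)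
    (hRb : ∃ c, ∀ ω, |R ω| ≤ c) (G : X →ᵇ ℝ) : Integrable (fun p => R p.1 * G p.2) μ := by
  obtain ⟨c, hc⟩ := hRb
  refine .of_bound ((hR.comp measurable_fst).mul
    (G.continuous.measurable.comp measurable_snd)).aestronglyMeasurable (c * ‖G‖)
    (ae_of_all _ fun p => ?_)
  rw [norm_mul, Real.norm_eq_abs]
  exact mul_le_mul (hc p.1) (G.norm_coe_le_norm p.2) (norm_nonneg _)
    ((abs_nonneg _).trans (hc p.1))

variable {l : Filter ι} {ν : ι → Measure (Ω × X)} {ν' : Measure (Ω × X)}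
  [∀ i, IsFiniteMeasure (ν i)] [IsFiniteMeasure ν']

theorem StablyTendsto.tendsto_integral_sum [TopologicalSpace X] [OpensMeasurableSpace X]
    (hν : StablyTendsto l ν ν') {κ : Type*} (T : Finset κ) {R : κ → Ω → ℝ}
    (hR : ∀ t, Measurable (R t)) (hRb : ∀ t, ∃ c, ∀ ω, |R t ω| ≤ c) (G : κ → X →ᵇ ℝ) :
    Tendsto (fun i => ∫ p, ∑ t ∈ T, R t p.1 * G t p.2 ∂ν i) l
      (𝓝 (∫ p, ∑ t ∈ T, R t p.1 * G t p.2 ∂ν')) := by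
  simp_rw [integral_finsetSum T fun t _ =>
    integrable_mul_boundedContinuousFunction (hR t) (hRb t) (G t)]
  exact tendsto_finsetSum T fun t _ => hν (R t) (G t) (hR t) (hRb t)

theorem StablyTendsto.tendsto_integral [MetricSpace X] [OpensMeasurableSpace X]
    (hν : StablyTendsto l ν ν') (hfst : ∀ i, (ν i).fst = ν'.fst)
    (htight : IsTightMeasureSet (insert ν'.snd (range fun i => (ν i).snd)))
    {f : Ω × X → ℝ} (hf : Measurable f) {C : ℝ} (hfC : ∀ p, ‖f p‖ ≤ C)
    (hfc : ∀ᵐ ω ∂ν'.fst, Continuous fun x => f (ω, x)) :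
    Tendsto (fun i => ∫ p, f p ∂ν i) l (𝓝 (∫ p, f p ∂ν')) := by
  refine tendsto_of_forall_dist_le fun ε hε => ?_
  set η := ENNReal.ofReal (ε / 2)
  have hη : 0 < η := ENNReal.ofReal_pos.2 (by positivity)
  obtain ⟨K, hK, hK_tail⟩ := isTightMeasureSet_iff_exists_isCompact_measure_compl_le.1 htight
    (η / ENNReal.ofReal (2 * C)) (ENNReal.div_pos_iff.2 ⟨hη.ne', ENNReal.ofReal_ne_top⟩)
  obtain ⟨T, G, hG⟩ :=
    exists_sum_mul_boundedContinuousFunction_edist_integral_le hf hfC hfc hK hη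
  have h_dist : ∀ (μ : Measure (Ω × X)) [IsFiniteMeasure μ], μ.fst = ν'.fst →
      μ.snd Kᶜ ≤ η / ENNReal.ofReal (2 * C) →
      dist (∫ p, f p ∂μ) (∫ p, ∑ t : T, f (p.1, t) * G t p.2 ∂μ) ≤ ε := by
    intro μ _ hμ hμK
    rw [← edist_le_ofReal hε.le, ← add_halves ε, ENNReal.ofReal_add (by positivity) (by positivity)]
    exact (hG μ hμ).trans <| add_le_add le_rfl <|
      (mul_le_mul_of_nonneg_left hμK zero_le).trans ENNReal.mul_div_le
  exact ⟨_, _, hν.tendsto_integral_sum Finset.univ (fun t => hf.comp measurable_prodMk_right)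
    (fun t => ⟨C, fun ω => (Real.norm_eq_abs _).symm.trans_le (hfC _)⟩) G,
    .of_forall fun i => h_dist _ (hfst i) (hK_tail _ (mem_insert_of_mem _ ⟨i, rfl⟩)),
    h_dist _ rfl (hK_tail _ (mem_insert _ _))⟩

end StableConvergence

section Kernels

variable {Ω X ι : Type*} [MeasurableSpace Ω] [MeasurableSpace X] {P : Measure Ω}

theorem integral_compProd_mul_boundedContinuousFunction [TopologicalSpace X]
    [OpensMeasurableSpace X] [IsFiniteMeasure P] {κ : Kernel Ω X} [IsFiniteKernel κ] {R : Ω → ℝ}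
    (hR : Measurable R) (hRb : ∃ c, ∀ ω, |R ω| ≤ c) (G : X →ᵇ ℝ) :
    ∫ p, R p.1 * G p.2 ∂(P ⊗ₘ κ) = ∫ ω, R ω * ∫ x, G x ∂κ ω ∂P := by
  rw [Measure.integral_compProd (integrable_mul_boundedContinuousFunction hR hRb G)]
  simp_rw [integral_const_mul]

theorem stablyTendsto_compProd [TopologicalSpace X] [OpensMeasurableSpace X] [IsFiniteMeasure P]
    {l : Filter ι} {κ : ι → Kernel Ω X} {κ' : Kernel Ω X} [∀ i, IsFiniteKernel (κ i)]
    [IsFiniteKernel κ']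
    (h : ∀ (G : X →ᵇ ℝ) (R : Ω → ℝ), Measurable R → (∃ c, ∀ ω, |R ω| ≤ c) →
      Tendsto (fun i => ∫ ω, R ω * ∫ x, G x ∂κ i ω ∂P) l (𝓝 (∫ ω, R ω * ∫ x, G x ∂κ' ω ∂P))) :
    StablyTendsto l (fun i => P ⊗ₘ κ i) (P ⊗ₘ κ') := fun R G hR hRb => by
  simpa only [integral_compProd_mul_boundedContinuousFunction hR hRb] using h G R hR hRb

theorem MeasureTheory.Measure.snd_compProd_apply_le [IsProbabilityMeasure P] {κ : Kernel Ω X}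
    [IsSFiniteKernel κ] {s : Set X} (hs : MeasurableSet s) {r : ℝ≥0∞} (h : ∀ ω, κ ω s ≤ r) :
    (P ⊗ₘ κ).snd s ≤ r := by
  rw [Measure.snd_compProd, Measure.bind_apply hs κ.aemeasurable]
  calc ∫⁻ ω, κ ω s ∂P ≤ ∫⁻ _, r ∂P := lintegral_mono h
    _ = r := by simp

theorem isTightMeasureSet_snd_compProd [TopologicalSpace X] [T2Space X] [OpensMeasurableSpace X]
    [IsProbabilityMeasure P] {κ : ι → Kernel Ω X} {κ' : Kernel Ω X} [∀ i, IsSFiniteKernel (κ i)]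
    [IsSFiniteKernel κ']
    (h : ∀ m : ℕ, ∃ K : Set X, IsCompact K ∧ (∀ i ω, κ i ω Kᶜ < 1 / (m + 1 : ℝ≥0∞)) ∧
      ∀ ω, κ' ω Kᶜ < 1 / (m + 1 : ℝ≥0∞)) :
    IsTightMeasureSet (insert (P ⊗ₘ κ').snd (range fun i => (P ⊗ₘ κ i).snd)) := by
  refine isTightMeasureSet_iff_exists_isCompact_measure_compl_le.2 fun ε hε => ?_
  obtain ⟨m, hm⟩ := ENNReal.exists_inv_nat_lt hε.ne'
  obtain ⟨K, hK, hκK, hκ'K⟩ := h m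
  have hmε : 1 / (m + 1 : ℝ≥0∞) ≤ ε := by
    rw [one_div]; exact (ENNReal.inv_le_inv.2 le_self_add).trans hm.le
  refine ⟨K, hK, ?_⟩
  rintro μ (rfl | ⟨i, rfl⟩)
  · exact Measure.snd_compProd_apply_le hK.measurableSet.compl fun ω => (hκ'K ω).le.trans hmε
  · exact Measure.snd_compProd_apply_le hK.measurableSet.compl fun ω => (hκK i ω).le.trans hmε

theorem integral_sub_integral_eq_compProd [IsFiniteMeasure P] {κ κ' : Kernel Ω X}
    [IsMarkovKernel κ] [IsMarkovKernel κ'] {f : Ω × X → ℝ} (hf : Measurable f) {C : ℝ}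
    (hfC : ∀ p, ‖f p‖ ≤ C) :
    ∫ ω, (∫ x, f (ω, x) ∂κ ω - ∫ x, f (ω, x) ∂κ' ω) ∂P =
      ∫ p, f p ∂(P ⊗ₘ κ) - ∫ p, f p ∂(P ⊗ₘ κ') := by
  have h_int : ∀ (η : Kernel Ω X) [IsMarkovKernel η],
      Integrable (fun ω => ∫ x, f (ω, x) ∂η ω) P := fun η _ =>
    .of_bound hf.stronglyMeasurable.integral_kernel_prod_right'.aestronglyMeasurable C <|
      ae_of_all _ fun ω => by
        simpa using norm_integral_le_of_norm_le_const (μ := η ω) (ae_of_all _ fun x => hfC (ω, x))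
  have hf_int : ∀ (η : Kernel Ω X) [IsMarkovKernel η], Integrable f (P ⊗ₘ η) := fun _ _ =>
    .of_bound hf.aestronglyMeasurable C (ae_of_all _ hfC)
  rw [integral_sub (h_int κ) (h_int κ'), Measure.integral_compProd (hf_int κ),
    Measure.integral_compProd (hf_int κ')]

end Kernels

theorem stable_convergence_of_kernels_general
    {S : Type*} [MetricSpace S] [MeasurableSpace S]
    (μn : ℕ → Measure S) (μ : Measure S)
    (hconvS : ∀ g : S →ᵇ ℝ,
      Tendsto (fun n => ∫ x, g x ∂(μn n)) atTop (nhds (∫ x, g x ∂μ)))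
    {Ω Ω₁ : Type*} [MeasurableSpace Ω] [MetricSpace Ω₁] [MeasurableSpace Ω₁]
    [BorelSpace Ω₁]
    (P : Measure Ω) [IsProbabilityMeasure P]
    (Qn : ℕ → Kernel Ω Ω₁) (Q : Kernel Ω Ω₁)
    [∀ n, IsMarkovKernel (Qn n)] [IsMarkovKernel Q]
    (htight : ∀ m : ℕ, ∃ K : Set Ω₁, IsCompact K ∧
      (∀ n ω, Qn n ω Kᶜ < 1 / (m + 1 : ℝ≥0∞)) ∧ ∀ ω, Q ω Kᶜ < 1 / (m + 1 : ℝ≥0∞))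
    (hstable : ∀ (G : Ω₁ →ᵇ ℝ) (R : Ω → ℝ), Measurable R → (∃ c, ∀ ω, |R ω| ≤ c) →
      Tendsto (fun n => ∫ ω, R ω * ∫ ω₁, G ω₁ ∂(Qn n ω) ∂P) atTop
        (nhds (∫ ω, R ω * ∫ ω₁, G ω₁ ∂(Q ω) ∂P)))
    (F : Ω₁ → Ω → ℝ) (hFm : Measurable (Function.uncurry F))
    (hFb : ∃ c, ∀ ω₁ ω, |F ω₁ ω| ≤ c)
    (hFc : ∀ᵐ ω ∂P, Continuous fun ω₁ => F ω₁ ω) :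
    (∀ F₀ : S →ᵇ ℝ,
      Tendsto (fun n => ∫ x, F₀ x ∂(μn n)) atTop (nhds (∫ x, F₀ x ∂μ))) ∧
    Tendsto
      (fun n => ∫ ω, ((∫ ω₁, F ω₁ ω ∂(Qn n ω)) - ∫ ω₁, F ω₁ ω ∂(Q ω)) ∂P)
      atTop (nhds 0) := by
  refine ⟨hconvS, ?_⟩
  obtain ⟨C, hC⟩ := hFb
  have hf : Measurable fun p : Ω × Ω₁ => F p.2 p.1 := hFm.comp measurable_swap
  have hfC : ∀ p : Ω × Ω₁, ‖F p.2 p.1‖ ≤ C := fun p => hC _ _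
  have h_lim := (stablyTendsto_compProd hstable).tendsto_integral
    (fun n => by rw [Measure.fst_compProd, Measure.fst_compProd])
    (isTightMeasureSet_snd_compProd htight) hf hfC (by rwa [Measure.fst_compProd])
  exact (tendsto_sub_nhds_zero_iff.2 h_lim).congr fun n =>
    (integral_sub_integral_eq_compProd hf hfC).symm

/-- (first part) if finite measures μₙ on a metric space with
uniformly bounded masses are uniformly tight and converge weakly to μ (tested on
bounded continuous functions), then ∫F dμₙ → ∫F dμ for every bounded continuous
F.  (Second, general part — Corollary 7.7 of the paper:) if random probability
kernels Q^{κₙ}(·,ω) converge in the stable sense to Q(·,ω) and are uniformly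
tight, then for every bounded measurable F(ω₁,ω) which is a.s. continuous in ω₁,
∫ dP(ω) ∫ F(ω₁,ω)(Q^{κₙ}(dω₁,ω) − Q(dω₁,ω)) → 0. -/
theorem stable_convergence_of_kernels
    {S : Type*} [MetricSpace S] [MeasurableSpace S] [OpensMeasurableSpace S]
    (μn : ℕ → Measure S) (μ : Measure S)
    (hfin : ∀ n, IsFiniteMeasure (μn n)) (hfin' : IsFiniteMeasure μ)
    (hmass : ∃ c : ℝ≥0∞, c ≠ ⊤ ∧ (∀ n, μn n Set.univ ≤ c) ∧ μ Set.univ ≤ c)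
    (htightS : ∀ m : ℕ, ∃ K : Set S, IsCompact K ∧
      (∀ n, μn n Kᶜ < 1 / (m + 1 : ℝ≥0∞)) ∧ μ Kᶜ < 1 / (m + 1 : ℝ≥0∞))
    (hconvS : ∀ g : S →ᵇ ℝ,
      Tendsto (fun n => ∫ x, g x ∂(μn n)) atTop (nhds (∫ x, g x ∂μ)))
    {Ω Ω₁ : Type*} [MeasurableSpace Ω] [MetricSpace Ω₁] [MeasurableSpace Ω₁]
    [BorelSpace Ω₁]
    (P : Measure Ω) [IsProbabilityMeasure P]
    (Qn : ℕ → Kernel Ω Ω₁) (Q : Kernel Ω Ω₁)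
    [∀ n, IsMarkovKernel (Qn n)] [IsMarkovKernel Q]
    (htight : ∀ m : ℕ, ∃ K : Set Ω₁, IsCompact K ∧
      (∀ n ω, Qn n ω Kᶜ < 1 / (m + 1 : ℝ≥0∞)) ∧ ∀ ω, Q ω Kᶜ < 1 / (m + 1 : ℝ≥0∞))
    (hstable : ∀ (G : Ω₁ →ᵇ ℝ) (R : Ω → ℝ), Measurable R → (∃ c, ∀ ω, |R ω| ≤ c) →
      Tendsto (fun n => ∫ ω, R ω * ∫ ω₁, G ω₁ ∂(Qn n ω) ∂P) atTop
        (nhds (∫ ω, R ω * ∫ ω₁, G ω₁ ∂(Q ω) ∂P)))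
    (F : Ω₁ → Ω → ℝ) (hFm : Measurable (Function.uncurry F))
    (hFb : ∃ c, ∀ ω₁ ω, |F ω₁ ω| ≤ c)
    (hFc : ∀ᵐ ω ∂P, Continuous fun ω₁ => F ω₁ ω) :
    (∀ F₀ : S →ᵇ ℝ,
      Tendsto (fun n => ∫ x, F₀ x ∂(μn n)) atTop (nhds (∫ x, F₀ x ∂μ))) ∧
    Tendsto
      (fun n => ∫ ω, ((∫ ω₁, F ω₁ ω ∂(Qn n ω)) - ∫ ω₁, F ω₁ ω ∂(Q ω)) ∂P)
      atTop (nhds 0) :=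
  stable_convergence_of_kernels_general μn μ hconvS P Qn Q htight hstable F hFm hFb hFc
end
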